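/- arXiv:1203.3836 — 2 statements merged into one kernel-verified Lean document; each statement's English description precedes it below -/
import Mathlib

section
/- Every generalized 1-skeleton (Γ, α, θ, λ) in ℝ^n whose generalized axial function is 2-independent — i.e. α(e) and α(e') are linearly independent for all distinct e, e' ∈ E^p and every vertex p — is equivalent to a 1-skeleton: there exist α' and λ' such that (Γ, α', θ, λ') is a 1-skeleton (α'(ē) = −α'(e) for all oriented edges e) equivalent to (Γ, α, θ, λ). -/
open SimpleGraph

universe u u' v

variable {V : Type u}

/-- The type of connections on a graph: for each oriented edge (given by an adjacency proof),
a bijection between the neighbor set of the initial vertex and that of the terminal vertex. -/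
abbrev GraphConn {V : Type u} (G : SimpleGraph V) : Type u :=
  ∀ ⦃p q : V⦄, G.Adj p q → (↥(G.neighborSet p) ≃ ↥(G.neighborSet q))

/-- The type of compatibility systems: for each oriented edge, a real-valued function on the
oriented edges at the initial vertex. -/
abbrev CompatSys {V : Type u} (G : SimpleGraph V) : Type u :=
  ∀ ⦃p q : V⦄, G.Adj p q → (↥(G.neighborSet p) → ℝ)

/-- The type of (generalized) axial functions with values in `W`. -/
abbrev AxialFn {V : Type u} (G : SimpleGraph V) (W : Type v) : Type (max u v) :=
  ∀ ⦃p q : V⦄, G.Adj p q → W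

/-- The `G`-adjacency underlying an element of a neighbor set. -/
def nadj {G : SimpleGraph V} {p : V} (e : ↥(G.neighborSet p)) : G.Adj p ↑e := e.2

/-- `θ` is a connection: `θ_e e = ē` and `θ_{ē} = θ_e⁻¹`. -/
def IsConnection (G : SimpleGraph V) (θ : GraphConn G) : Prop :=
  (∀ ⦃p q : V⦄ (h : G.Adj p q), θ h ⟨q, h⟩ = ⟨p, h.symm⟩) ∧
  (∀ ⦃p q : V⦄ (h : G.Adj p q), θ h.symm = (θ h).symm)

/-- `lam` is a compatibility system for `(G, θ)`: positive values with
`λ_{ē}(θ_e e') = 1 / λ_e(e')`. -/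
def IsCompatSystem (G : SimpleGraph V) (θ : GraphConn G) (lam : CompatSys G) : Prop :=
  (∀ ⦃p q : V⦄ (h : G.Adj p q) (e : ↥(G.neighborSet p)), 0 < lam h e) ∧
  (∀ ⦃p q : V⦄ (h : G.Adj p q) (e : ↥(G.neighborSet p)),
      lam h.symm (θ h e) = (lam h e)⁻¹)

section Axial

variable {W : Type v} [AddCommGroup W] [Module ℝ W]

/-- `α` is a generalized axial function for `(G, θ, λ)`: (gA1) `α(e) = -m_e • α(ē)` for some
`m_e > 0`, and (gA2) `α(e') - λ_e(e') • α(θ_e(e'))` is a scalar multiple of `α(e)` for `e' ≠ e`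
at the initial vertex of `e`. -/
def IsGenAxial (G : SimpleGraph V) (θ : GraphConn G) (lam : CompatSys G)
    (α : AxialFn G W) : Prop :=
  (∀ ⦃p q : V⦄ (h : G.Adj p q), ∃ m : ℝ, 0 < m ∧ α h = -(m • α h.symm)) ∧
  (∀ ⦃p q : V⦄ (h : G.Adj p q) (e : ↥(G.neighborSet p)), (↑e : V) ≠ q →
      ∃ c : ℝ, α (nadj e) - lam h e • α (nadj (θ h e)) = c • α h)

/-- The quadruple `(G, θ, λ, α)` is a generalized 1-skeleton (on a connected graph). -/
structure IsGenSkeleton (G : SimpleGraph V) (θ : GraphConn G) (lam : CompatSys G)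
    (α : AxialFn G W) : Prop where
  connected : G.Connected
  conn : IsConnection G θ
  compat : IsCompatSystem G θ lam
  axial : IsGenAxial G θ lam α

/-- The extra axioms making a generalized 1-skeleton an honest 1-skeleton:
`α(ē) = -α(e)` and pairwise linear independence at each vertex. -/
def IsSkeletal (G : SimpleGraph V) (α : AxialFn G W) : Prop :=
  (∀ ⦃p q : V⦄ (h : G.Adj p q), α h.symm = -α h) ∧
  (∀ (p : V) (e e' : ↥(G.neighborSet p)), e ≠ e' →
      LinearIndependent ℝ ![α (nadj e), α (nadj e')])

/-- `(G, θ, λ, α)` is a 1-skeleton. -/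
def IsOneSkeleton (G : SimpleGraph V) (θ : GraphConn G) (lam : CompatSys G)
    (α : AxialFn G W) : Prop :=
  IsGenSkeleton G θ lam α ∧ IsSkeletal G α

/-- `G` is `d`-valent. -/
def Valency (G : SimpleGraph V) (d : ℕ) : Prop :=
  ∀ p : V, (G.neighborSet p).ncard = d

/-- `α` is `k`-independent. -/
def kIndep (G : SimpleGraph V) (α : AxialFn G W) (k : ℕ) : Prop :=
  ∀ (p : V) (s : Finset ↥(G.neighborSet p)), s.card = k →
    LinearIndependent ℝ (fun e : ↥(↑s : Set ↥(G.neighborSet p)) => α (nadj (e : ↥(G.neighborSet p))))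

/-- `α` is effective: the axial vectors at each vertex span the target space. -/
def EffectiveAxial (G : SimpleGraph V) (α : AxialFn G W) : Prop :=
  ∀ p : V, Submodule.span ℝ (Set.range fun e : ↥(G.neighborSet p) => α (nadj e)) = ⊤

/-- A covector is generic if it pairs nonzero with each axial vector. -/
def GenericCovec (G : SimpleGraph V) (α : AxialFn G W) (ξ : W →ₗ[ℝ] ℝ) : Prop :=
  ∀ ⦃p q : V⦄ (h : G.Adj p q), ξ (α h) ≠ 0

/-- The directed-edge relation induced by a covector. -/
def dirRel (G : SimpleGraph V) (α : AxialFn G W) (ξ : W →ₗ[ℝ] ℝ) : V → V → Prop :=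
  fun p q => ∃ h : G.Adj p q, 0 < ξ (α h)

/-- A generic covector is polarizing if the induced orientation has no directed cycles. -/
def PolarizingCovec (G : SimpleGraph V) (α : AxialFn G W) (ξ : W →ₗ[ℝ] ℝ) : Prop :=
  GenericCovec G α ξ ∧ ∀ p : V, ¬ Relation.TransGen (dirRel G α ξ) p p

/-- A Morse function compatible with a (polarizing) covector. -/
def MorseCompat (G : SimpleGraph V) (α : AxialFn G W) (ξ : W →ₗ[ℝ] ℝ) (φ : V → ℝ) : Prop :=
  Function.Injective φ ∧ ∀ ⦃p q : V⦄ (h : G.Adj p q), 0 < ξ (α h) → φ p < φ q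

/-- An embedding of a 1-skeleton. -/
def IsSkelEmbedding (G : SimpleGraph V) (α : AxialFn G W) (f : V → W) : Prop :=
  ∀ ⦃p q : V⦄ (h : G.Adj p q), ∃ c : ℝ, 0 < c ∧ f q - f p = c • α h

end Axial
section Sub

variable {W : Type v} [AddCommGroup W] [Module ℝ W]

/-- Transport of oriented edges along a walk, via the connection. -/
def transport {G : SimpleGraph V} (θ : GraphConn G) :
    ∀ {p q : V}, G.Walk p q → ↥(G.neighborSet p) → ↥(G.neighborSet q)
  | _, _, SimpleGraph.Walk.nil, e => e
  | _, _, SimpleGraph.Walk.cons h w, e => transport θ w (θ h e)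

/-- The local path-connection number of an oriented edge along a walk. -/
def transNum {G : SimpleGraph V} (θ : GraphConn G) (lam : CompatSys G) :
    ∀ {p q : V}, G.Walk p q → ↥(G.neighborSet p) → ℝ
  | _, _, SimpleGraph.Walk.nil, _ => 1
  | _, _, SimpleGraph.Walk.cons h w, e => lam h e * transNum θ lam w (θ h e)

/-- A walk of `G` lies in the subgraph `H` if all its darts are edges of `H`. -/
def WalkIn {G : SimpleGraph V} (H : G.Subgraph) {p q : V} (w : G.Walk p q) : Prop :=
  ∀ d ∈ w.darts, H.Adj d.toProd.1 d.toProd.2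

/-- A subskeleton: a connected regular totally geodesic subgraph. -/
structure IsSubskeleton {G : SimpleGraph V} (θ : GraphConn G) (H : G.Subgraph) : Prop where
  connected : H.Connected
  regular : ∃ k : ℕ, ∀ p ∈ H.verts, (H.neighborSet p).ncard = k
  geodesic : ∀ ⦃p q : V⦄ (h : H.Adj p q) (e : ↥(G.neighborSet p)),
      H.Adj p ↑e → H.Adj q ↑(θ (H.adj_sub h) e)

/-- The subskeleton `H` has trivial normal holonomy. -/
def TrivialNormalHolonomy {G : SimpleGraph V} (θ : GraphConn G) (H : G.Subgraph) : Prop :=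
  ∀ (p : V) (w : G.Walk p p), WalkIn H w →
    ∀ e : ↥(G.neighborSet p), ¬ H.Adj p ↑e → transport θ w e = e

/-- The subskeleton `H` is level. -/
def LevelSub {G : SimpleGraph V} (θ : GraphConn G) (lam : CompatSys G)
    (H : G.Subgraph) : Prop :=
  ∀ (p : V) (w : G.Walk p p), WalkIn H w →
    ∀ e : ↥(G.neighborSet p), ¬ H.Adj p ↑e → transport θ w e = e →
      transNum θ lam w e = 1

/-- The index of a vertex of a subgraph with respect to a covector. -/
noncomputable def subIndex {G : SimpleGraph V} (α : AxialFn G W) (ξ : W →ₗ[ℝ] ℝ)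
    (H : G.Subgraph) (p : V) : ℕ :=
  {q : V | ∃ h : H.Adj p q, ξ (α (H.adj_sub h)) < 0}.ncard

/-- `b₀` of a subgraph with respect to a covector: the number of index-zero vertices. -/
noncomputable def subB0 {G : SimpleGraph V} (α : AxialFn G W) (ξ : W →ₗ[ℝ] ℝ)
    (H : G.Subgraph) : ℕ :=
  {p : V | p ∈ H.verts ∧ subIndex α ξ H p = 0}.ncard

/-- A 2-face: a 2-valent subskeleton with `b₀ = 1` (computed with the covector `ξ`). -/
def IsTwoFace {G : SimpleGraph V} (θ : GraphConn G) (α : AxialFn G W) (ξ : W →ₗ[ℝ] ℝ)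
    (H : G.Subgraph) : Prop :=
  IsSubskeleton θ H ∧ (∀ p ∈ H.verts, (H.neighborSet p).ncard = 2) ∧ subB0 α ξ H = 1

/-- Enough 2-faces: any two distinct oriented edges at a vertex lie on a unique 2-face. -/
def EnoughTwoFaces (G : SimpleGraph V) (θ : GraphConn G) (α : AxialFn G W)
    (ξ : W →ₗ[ℝ] ℝ) : Prop :=
  ∀ (p : V) (e e' : ↥(G.neighborSet p)), e ≠ e' →
    ∃! H : G.Subgraph, IsTwoFace θ α ξ H ∧ H.Adj p ↑e ∧ H.Adj p ↑e'

/-- A 1-skeleton is reducible if it admits a polarizing covector and has enough 2-faces. -/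
def ReducibleSkel (G : SimpleGraph V) (θ : GraphConn G) (α : AxialFn G W) : Prop :=
  ∃ ξ : W →ₗ[ℝ] ℝ, PolarizingCovec G α ξ ∧ EnoughTwoFaces G θ α ξ

/-- A total lift: an effective generalized axial function `A` for the same `(G, θ, λ)` with
values in `ℝ^d` (`d` the valency), together with a surjective linear map `L` with `α = L ∘ A`. -/
def HasTotalLift (G : SimpleGraph V) (θ : GraphConn G) (lam : CompatSys G)
    (α : AxialFn G W) (d : ℕ) : Prop :=
  ∃ A : AxialFn G (Fin d → ℝ),
    IsGenAxial G θ lam A ∧ EffectiveAxial G A ∧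
    ∃ L : (Fin d → ℝ) →ₗ[ℝ] W, Function.Surjective L ∧
      ∀ ⦃p q : V⦄ (h : G.Adj p q), α h = L (A h)

/-- Equivalence of generalized 1-skeleta on the same graph-connection pair. -/
def EquivGenSkel (G : SimpleGraph V) (θ : GraphConn G) (lam lam' : CompatSys G)
    (α α' : AxialFn G W) : Prop :=
  ∃ κ : ∀ ⦃p q : V⦄, G.Adj p q → ℝ,
    (∀ ⦃p q : V⦄ (h : G.Adj p q), 0 < κ h) ∧
    (∀ ⦃p q : V⦄ (h : G.Adj p q), α h = κ h • α' h) ∧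
    (∀ ⦃p q : V⦄ (h : G.Adj p q) (e : ↥(G.neighborSet p)),
        lam h e = (κ (nadj e) / κ (nadj (θ h e))) * lam' h e)

/-- The graph whose edges are the edges of `G` with axial vector in the subspace `Hs`. -/
def sliceGraph (G : SimpleGraph V) (α : AxialFn G W) (Hs : Submodule ℝ W) :
    SimpleGraph V where
  Adj p q := ∃ h : G.Adj p q, α h ∈ Hs ∧ α h.symm ∈ Hs
  symm := by
    constructor
    intro p q ⟨h, h1, h2⟩
    exact ⟨h.symm, h2, h1⟩
  loopless := by
    constructor
    intro p ⟨h, _⟩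
    exact G.irrefl h

/-- The connected component of `v` in the slice graph, as a subgraph of `G`. -/
def sliceComponent (G : SimpleGraph V) (α : AxialFn G W) (Hs : Submodule ℝ W) (v : V) :
    G.Subgraph where
  verts := {w : V | (sliceGraph G α Hs).Reachable v w}
  Adj p q := (sliceGraph G α Hs).Adj p q ∧ (sliceGraph G α Hs).Reachable v p ∧
    (sliceGraph G α Hs).Reachable v q
  adj_sub := fun h => h.1.1
  edge_vert := fun h => h.2.1
  symm := ⟨fun p q h => ⟨h.1.symm, h.2.2, h.2.1⟩⟩

/-- Pointedness of a subgraph (e.g. a slice): for every covector nonvanishing on its edges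
there is a unique source vertex. -/
def SubPointed {G : SimpleGraph V} (α : AxialFn G W) (H : G.Subgraph) : Prop :=
  ∀ ξ : W →ₗ[ℝ] ℝ, (∀ ⦃p q : V⦄ (h : H.Adj p q), ξ (α (H.adj_sub h)) ≠ 0) →
    ∃! p : V, p ∈ H.verts ∧ ∀ ⦃q : V⦄ (h : H.Adj p q), 0 < ξ (α (H.adj_sub h))

/-- Pointedness of the whole skeleton: for every generic covector there is a unique source. -/
def PointedSkel (G : SimpleGraph V) (α : AxialFn G W) : Prop :=
  ∀ ξ : W →ₗ[ℝ] ℝ, GenericCovec G α ξ →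
    ∃! p : V, ∀ ⦃q : V⦄ (h : G.Adj p q), 0 < ξ (α h)

/-- A 3-independent 1-skeleton is noncyclic if it admits a polarizing covector and every
2-slice is pointed. -/
def Noncyclic (G : SimpleGraph V) (α : AxialFn G W) : Prop :=
  kIndep G α 3 ∧ (∃ ξ : W →ₗ[ℝ] ℝ, PolarizingCovec G α ξ) ∧
  ∀ (Hs : Submodule ℝ W), Module.finrank ℝ ↥Hs = 2 → ∀ v : V,
    SubPointed α (sliceComponent G α Hs v)

/-- A `d`-valent `d`-independent 1-skeleton is toral if every slice is pointed. -/
def Toral (G : SimpleGraph V) (α : AxialFn G W) : Prop :=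
  ∀ (Hs : Submodule ℝ W) (v : V), SubPointed α (sliceComponent G α Hs v)

end Sub
section CrossSection

variable {Vc : Type u'} {W : Type v} [AddCommGroup W] [Module ℝ W]

/-- Specification of the *down* `c`-cross-section of a reducible 1-skeleton `(G, θ, λ, α)`
with polarizing covector `ξ`, compatible Morse function `φ`, and regular value `c`.
`νm` identifies the vertices of the cross-section graph `Gc` with the oriented edges of `G`
at `c`-level; `face` assigns to each oriented edge of `Gc` the corresponding 2-face of `G`
at `c`-level; `θc`, `λc`, `αc` are the down connection, down compatibility system and down
axial function, characterized by normal transport along lower paths. -/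
structure IsDownCrossSection (G : SimpleGraph V) (θ : GraphConn G) (lam : CompatSys G)
    (α : AxialFn G W) (ξ : W →ₗ[ℝ] ℝ) (φ : V → ℝ) (c : ℝ)
    (Gc : SimpleGraph Vc) (νm : Vc → V × V) (θc : GraphConn Gc) (lamc : CompatSys Gc)
    (αc : AxialFn Gc ↥(LinearMap.ker ξ))
    (face : ∀ ⦃x y : Vc⦄, Gc.Adj x y → G.Subgraph) : Prop where
  nu_inj : Function.Injective νm
  nu_level : ∀ x : Vc, ∃ _ : G.Adj (νm x).1 (νm x).2, φ (νm x).1 < c ∧ c < φ (νm x).2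
  nu_surj : ∀ ⦃p q : V⦄, G.Adj p q → φ p < c → c < φ q → ∃ x : Vc, νm x = (p, q)
  conn_c : IsConnection Gc θc
  compat_c : IsCompatSystem Gc θc lamc
  face_two : ∀ ⦃x y : Vc⦄ (h : Gc.Adj x y), IsTwoFace θ α ξ (face h)
  face_symm : ∀ ⦃x y : Vc⦄ (h : Gc.Adj x y), face h.symm = face h
  face_init : ∀ ⦃x y : Vc⦄ (h : Gc.Adj x y), (face h).Adj (νm x).1 (νm x).2
  face_inj : ∀ ⦃x y y' : Vc⦄ (h : Gc.Adj x y) (h' : Gc.Adj x y'), face h = face h' → y = y'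
  face_surj : ∀ Q : G.Subgraph, IsTwoFace θ α ξ Q →
      ∀ ⦃p q : V⦄, Q.Adj p q → φ p < c → c < φ q →
        ∃ (x y : Vc) (h : Gc.Adj x y), νm x = (p, q) ∧ face h = Q
  conn_spec : ∀ ⦃x y : Vc⦄ (h : Gc.Adj x y) (x' : ↥(Gc.neighborSet x)), (↑x' : Vc) ≠ y →
      ∀ e : ↥(G.neighborSet (νm x).1),
        (face (nadj x')).Adj (νm x).1 ↑e → (↑e : V) ≠ (νm x).2 →
      ∀ e' : ↥(G.neighborSet (νm y).1),
        (face (nadj (θc h x'))).Adj (νm y).1 ↑e' → (↑e' : V) ≠ (νm y).2 →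
      ∀ (wlk : G.Walk (νm x).1 (νm y).1), WalkIn (face h) wlk →
        (∀ z ∈ wlk.support, φ z < c) →
        transport θ wlk e = e'
  lam_spec : ∀ ⦃x y : Vc⦄ (h : Gc.Adj x y) (x' : ↥(Gc.neighborSet x)), (↑x' : Vc) ≠ y →
      ∀ e : ↥(G.neighborSet (νm x).1),
        (face (nadj x')).Adj (νm x).1 ↑e → (↑e : V) ≠ (νm x).2 →
      ∀ (wlk : G.Walk (νm x).1 (νm y).1), WalkIn (face h) wlk →
        (∀ z ∈ wlk.support, φ z < c) →
        transNum θ lam wlk e = lamc h x'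
  alpha_spec : ∀ ⦃x y : Vc⦄ (h : Gc.Adj x y) (hpq : G.Adj (νm x).1 (νm x).2)
      (e : ↥(G.neighborSet (νm x).1)),
      (face h).Adj (νm x).1 ↑e → (↑e : V) ≠ (νm x).2 →
      (↑(αc h) : W) = α (nadj e) - (ξ (α (nadj e)) / ξ (α hpq)) • α hpq

/-- Specification of the *up* `c`-cross-section; as `IsDownCrossSection`, but using normal
transport along upper paths and the up axial function. -/
structure IsUpCrossSection (G : SimpleGraph V) (θ : GraphConn G) (lam : CompatSys G)
    (α : AxialFn G W) (ξ : W →ₗ[ℝ] ℝ) (φ : V → ℝ) (c : ℝ)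
    (Gc : SimpleGraph Vc) (νm : Vc → V × V) (θc : GraphConn Gc) (lamc : CompatSys Gc)
    (αc : AxialFn Gc ↥(LinearMap.ker ξ))
    (face : ∀ ⦃x y : Vc⦄, Gc.Adj x y → G.Subgraph) : Prop where
  nu_inj : Function.Injective νm
  nu_level : ∀ x : Vc, ∃ _ : G.Adj (νm x).1 (νm x).2, φ (νm x).1 < c ∧ c < φ (νm x).2
  nu_surj : ∀ ⦃p q : V⦄, G.Adj p q → φ p < c → c < φ q → ∃ x : Vc, νm x = (p, q)
  conn_c : IsConnection Gc θc
  compat_c : IsCompatSystem Gc θc lamc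
  face_two : ∀ ⦃x y : Vc⦄ (h : Gc.Adj x y), IsTwoFace θ α ξ (face h)
  face_symm : ∀ ⦃x y : Vc⦄ (h : Gc.Adj x y), face h.symm = face h
  face_init : ∀ ⦃x y : Vc⦄ (h : Gc.Adj x y), (face h).Adj (νm x).1 (νm x).2
  face_inj : ∀ ⦃x y y' : Vc⦄ (h : Gc.Adj x y) (h' : Gc.Adj x y'), face h = face h' → y = y'
  face_surj : ∀ Q : G.Subgraph, IsTwoFace θ α ξ Q →
      ∀ ⦃p q : V⦄, Q.Adj p q → φ p < c → c < φ q →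
        ∃ (x y : Vc) (h : Gc.Adj x y), νm x = (p, q) ∧ face h = Q
  conn_spec : ∀ ⦃x y : Vc⦄ (h : Gc.Adj x y) (x' : ↥(Gc.neighborSet x)), (↑x' : Vc) ≠ y →
      ∀ e : ↥(G.neighborSet (νm x).2),
        (face (nadj x')).Adj (νm x).2 ↑e → (↑e : V) ≠ (νm x).1 →
      ∀ e' : ↥(G.neighborSet (νm y).2),
        (face (nadj (θc h x'))).Adj (νm y).2 ↑e' → (↑e' : V) ≠ (νm y).1 →
      ∀ (wlk : G.Walk (νm x).2 (νm y).2), WalkIn (face h) wlk →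
        (∀ z ∈ wlk.support, c < φ z) →
        transport θ wlk e = e'
  lam_spec : ∀ ⦃x y : Vc⦄ (h : Gc.Adj x y) (x' : ↥(Gc.neighborSet x)), (↑x' : Vc) ≠ y →
      ∀ e : ↥(G.neighborSet (νm x).2),
        (face (nadj x')).Adj (νm x).2 ↑e → (↑e : V) ≠ (νm x).1 →
      ∀ (wlk : G.Walk (νm x).2 (νm y).2), WalkIn (face h) wlk →
        (∀ z ∈ wlk.support, c < φ z) →
        transNum θ lam wlk e = lamc h x'
  alpha_spec : ∀ ⦃x y : Vc⦄ (h : Gc.Adj x y) (hpq : G.Adj (νm x).1 (νm x).2)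
      (e : ↥(G.neighborSet (νm x).2)),
      (face h).Adj (νm x).2 ↑e → (↑e : V) ≠ (νm x).1 →
      (↑(αc h) : W) = α (nadj e) - (ξ (α (nadj e)) / ξ (α hpq.symm)) • α hpq.symm

end CrossSection
section BlowUp

variable {V' : Type u'} {W : Type v} [AddCommGroup W] [Module ℝ W]

/-- A blow-up system for the subskeleton `H`: positive scalars on the normal edges with
`n(e') = λ_e(e') · n(θ_e(e'))` along edges of `H`. -/
def IsBlowUpSystem {G : SimpleGraph V} (θ : GraphConn G) (lam : CompatSys G)
    (H : G.Subgraph) (n : ∀ p : V, ↥(G.neighborSet p) → ℝ) : Prop :=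
  (∀ p ∈ H.verts, ∀ e : ↥(G.neighborSet p), ¬ H.Adj p ↑e → 0 < n p e) ∧
  (∀ ⦃p q : V⦄ (h : H.Adj p q) (e : ↥(G.neighborSet p)), ¬ H.Adj p ↑e →
      n p e = lam (H.adj_sub h) e * n q (θ (H.adj_sub h) e))

/-- No normal edge of `H` has its terminal vertex in `H`. -/
def NoChord {G : SimpleGraph V} (H : G.Subgraph) : Prop :=
  ∀ p ∈ H.verts, ∀ e : ↥(G.neighborSet p), ¬ H.Adj p ↑e → (↑e : V) ∉ H.verts

/-- Specification of the blow-up `(G', θ', λ', α')` of the generalized 1-skeleton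
`(G, θ, λ, α)` along the subskeleton `H`, with respect to the blow-up system `n`.
`β` is the blow-down map on vertices and `z p e` is the singular-locus vertex `z^p_e`
(for `p ∈ H.verts` and `e` normal to `H` at `p`). -/
structure IsBlowUp (G : SimpleGraph V) (θ : GraphConn G) (lam : CompatSys G)
    (α : AxialFn G W) (H : G.Subgraph) (n : ∀ p : V, ↥(G.neighborSet p) → ℝ)
    (G' : SimpleGraph V') (θ' : GraphConn G') (lam' : CompatSys G') (α' : AxialFn G' W)
    (β : V' → V) (z : ∀ p : V, ↥(G.neighborSet p) → V') : Prop where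
  conn' : IsConnection G' θ'
  compat' : IsCompatSystem G' θ' lam'
  beta_z : ∀ p ∈ H.verts, ∀ e : ↥(G.neighborSet p), ¬ H.Adj p ↑e → β (z p e) = p
  z_inj : ∀ ⦃p p' : V⦄, p ∈ H.verts → p' ∈ H.verts →
      ∀ ⦃e : ↥(G.neighborSet p)⦄ ⦃e' : ↥(G.neighborSet p')⦄,
        ¬ H.Adj p ↑e → ¬ H.Adj p' ↑e' → z p e = z p' e' → p = p' ∧ (↑e : V) = ↑e'
  sing_surj : ∀ x' : V', β x' ∈ H.verts →
      ∃ (p : V) (_ : p ∈ H.verts) (e : ↥(G.neighborSet p)), ¬ H.Adj p ↑e ∧ x' = z p e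
  beta_inj : ∀ ⦃x' y' : V'⦄, β x' = β y' → β x' ∉ H.verts → x' = y'
  beta_surj : ∀ x : V, x ∉ H.verts → ∃ x' : V', β x' = x
  adj_iff : ∀ x' y' : V', G'.Adj x' y' ↔
      ((β x' ∉ H.verts ∧ β y' ∉ H.verts ∧ G.Adj (β x') (β y')) ∨
       (∃ (p : V) (_ : p ∈ H.verts) (e : ↥(G.neighborSet p)) (_ : ¬ H.Adj p ↑e),
          (x' = z p e ∧ β y' = ↑e ∧ β y' ∉ H.verts) ∨
          (y' = z p e ∧ β x' = ↑e ∧ β x' ∉ H.verts)) ∨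
       (∃ (p : V) (_ : p ∈ H.verts) (e e' : ↥(G.neighborSet p))
          (_ : ¬ H.Adj p ↑e) (_ : ¬ H.Adj p ↑e'),
          (↑e : V) ≠ ↑e' ∧ x' = z p e ∧ y' = z p e') ∨
       (∃ (p q : V) (hpq : H.Adj p q) (e : ↥(G.neighborSet p)) (_ : ¬ H.Adj p ↑e),
          x' = z p e ∧ y' = z q (θ (H.adj_sub hpq) e)))
  proj_adj : ∀ ⦃x' w' : V'⦄, G'.Adj x' w' → β x' ∉ H.verts → G.Adj (β x') (β w')
  -- axial function
  alpha_ns : ∀ ⦃x' y' : V'⦄ (h' : G'.Adj x' y'), β x' ∉ H.verts →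
      ∀ (h : G.Adj (β x') (β y')), α' h' = α h
  alpha_t : ∀ ⦃p : V⦄, p ∈ H.verts → ∀ (e : ↥(G.neighborSet p)), ¬ H.Adj p ↑e →
      ∀ ⦃y' : V'⦄ (h' : G'.Adj (z p e) y'), β y' = ↑e →
        α' h' = (n p e)⁻¹ • α (nadj e)
  alpha_h : ∀ ⦃p q : V⦄ (hpq : H.Adj p q) (e : ↥(G.neighborSet p)), ¬ H.Adj p ↑e →
      ∀ (h' : G'.Adj (z p e) (z q (θ (H.adj_sub hpq) e))), α' h' = α (H.adj_sub hpq)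
  alpha_v : ∀ ⦃p : V⦄, p ∈ H.verts →
      ∀ (e e' : ↥(G.neighborSet p)), ¬ H.Adj p ↑e → ¬ H.Adj p ↑e' → (↑e : V) ≠ ↑e' →
      ∀ (h' : G'.Adj (z p e) (z p e')),
        α' h' = α (nadj e') - (n p e' / n p e) • α (nadj e)
  -- connection, on edges not issuing from the singular locus
  conn_ns : ∀ ⦃x' y' : V'⦄ (h' : G'.Adj x' y'), β x' ∉ H.verts → β y' ∉ H.verts →
      ∀ (h : G.Adj (β x') (β y')) (w' : ↥(G'.neighborSet x')) (w : ↥(G.neighborSet (β x'))),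
        (↑w : V) = β ↑w' → β ↑(θ' h' w') = ↑(θ h w)
  -- connection along `z^p_e → t(e)`
  conn_t_v : ∀ ⦃p : V⦄, p ∈ H.verts → ∀ (e : ↥(G.neighborSet p)), ¬ H.Adj p ↑e →
      ∀ ⦃y' : V'⦄ (h' : G'.Adj (z p e) y'), β y' = ↑e →
      ∀ (e'' : ↥(G.neighborSet p)), ¬ H.Adj p ↑e'' → (↑e'' : V) ≠ ↑e →
      ∀ (w' : ↥(G'.neighborSet (z p e))), (↑w' : V') = z p e'' →
        β ↑(θ' h' w') = ↑(θ (nadj e) e'')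
  conn_t_h : ∀ ⦃p : V⦄, p ∈ H.verts → ∀ (e : ↥(G.neighborSet p)), ¬ H.Adj p ↑e →
      ∀ ⦃y' : V'⦄ (h' : G'.Adj (z p e) y'), β y' = ↑e →
      ∀ ⦃r : V⦄ (hpr : H.Adj p r)
        (w' : ↥(G'.neighborSet (z p e))), (↑w' : V') = z r (θ (H.adj_sub hpr) e) →
      ∀ (rr : ↥(G.neighborSet p)), (↑rr : V) = r →
        β ↑(θ' h' w') = ↑(θ (nadj e) rr)
  -- connection along a horizontal edge `z^p_e → z^q_f`
  conn_h_t : ∀ ⦃p q : V⦄ (hpq : H.Adj p q) (e : ↥(G.neighborSet p)), ¬ H.Adj p ↑e →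
      ∀ (h' : G'.Adj (z p e) (z q (θ (H.adj_sub hpq) e)))
        (w' : ↥(G'.neighborSet (z p e))), β ↑w' = ↑e →
        β ↑(θ' h' w') = ↑(θ (H.adj_sub hpq) e)
  conn_h_v : ∀ ⦃p q : V⦄ (hpq : H.Adj p q) (e : ↥(G.neighborSet p)), ¬ H.Adj p ↑e →
      ∀ (h' : G'.Adj (z p e) (z q (θ (H.adj_sub hpq) e)))
        (e'' : ↥(G.neighborSet p)), ¬ H.Adj p ↑e'' → (↑e'' : V) ≠ ↑e →
      ∀ (w' : ↥(G'.neighborSet (z p e))), (↑w' : V') = z p e'' →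
        (↑(θ' h' w') : V') = z q (θ (H.adj_sub hpq) e'')
  conn_h_h : ∀ ⦃p q : V⦄ (hpq : H.Adj p q) (e : ↥(G.neighborSet p)), ¬ H.Adj p ↑e →
      ∀ (h' : G'.Adj (z p e) (z q (θ (H.adj_sub hpq) e)))
        ⦃r : V⦄ (hpr : H.Adj p r)
        (w' : ↥(G'.neighborSet (z p e))), (↑w' : V') = z r (θ (H.adj_sub hpr) e) →
      ∀ (rr : ↥(G.neighborSet p)), (↑rr : V) = r →
      ∀ (s : V), s = ↑(θ (H.adj_sub hpq) rr) →
      ∀ (hqs : H.Adj q s),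
        (↑(θ' h' w') : V') = z s (θ (H.adj_sub hqs) (θ (H.adj_sub hpq) e))
  -- connection along a vertical edge `z^p_e → z^p_{e'}`
  conn_v_t : ∀ ⦃p : V⦄, p ∈ H.verts →
      ∀ (e e' : ↥(G.neighborSet p)), ¬ H.Adj p ↑e → ¬ H.Adj p ↑e' → (↑e : V) ≠ ↑e' →
      ∀ (h' : G'.Adj (z p e) (z p e')) (w' : ↥(G'.neighborSet (z p e))), β ↑w' = ↑e →
        β ↑(θ' h' w') = ↑e'
  conn_v_h : ∀ ⦃p : V⦄, p ∈ H.verts →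
      ∀ (e e' : ↥(G.neighborSet p)), ¬ H.Adj p ↑e → ¬ H.Adj p ↑e' → (↑e : V) ≠ ↑e' →
      ∀ (h' : G'.Adj (z p e) (z p e')) ⦃r : V⦄ (hpr : H.Adj p r)
        (w' : ↥(G'.neighborSet (z p e))), (↑w' : V') = z r (θ (H.adj_sub hpr) e) →
        (↑(θ' h' w') : V') = z r (θ (H.adj_sub hpr) e')
  conn_v_v : ∀ ⦃p : V⦄, p ∈ H.verts →
      ∀ (e e' e'' : ↥(G.neighborSet p)), ¬ H.Adj p ↑e → ¬ H.Adj p ↑e' → ¬ H.Adj p ↑e'' →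
        (↑e : V) ≠ ↑e' → (↑e'' : V) ≠ ↑e → (↑e'' : V) ≠ ↑e' →
      ∀ (h' : G'.Adj (z p e) (z p e')) (w' : ↥(G'.neighborSet (z p e))),
        (↑w' : V') = z p e'' → (↑(θ' h' w') : V') = z p e''
  -- compatibility system
  lam_ns : ∀ ⦃x' y' : V'⦄ (h' : G'.Adj x' y'), β x' ∉ H.verts →
      ∀ (h : G.Adj (β x') (β y')) (w' : ↥(G'.neighborSet x')) (w : ↥(G.neighborSet (β x'))),
        (↑w : V) = β ↑w' → lam' h' w' = lam h w
  lam_t_v : ∀ ⦃p : V⦄, p ∈ H.verts → ∀ (e : ↥(G.neighborSet p)), ¬ H.Adj p ↑e →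
      ∀ ⦃y' : V'⦄ (h' : G'.Adj (z p e) y'), β y' = ↑e →
      ∀ (e'' : ↥(G.neighborSet p)), ¬ H.Adj p ↑e'' → (↑e'' : V) ≠ ↑e →
      ∀ (w' : ↥(G'.neighborSet (z p e))), (↑w' : V') = z p e'' →
        lam' h' w' = lam (nadj e) e''
  lam_t_h : ∀ ⦃p : V⦄, p ∈ H.verts → ∀ (e : ↥(G.neighborSet p)), ¬ H.Adj p ↑e →
      ∀ ⦃y' : V'⦄ (h' : G'.Adj (z p e) y'), β y' = ↑e →
      ∀ ⦃r : V⦄ (hpr : H.Adj p r)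
        (w' : ↥(G'.neighborSet (z p e))), (↑w' : V') = z r (θ (H.adj_sub hpr) e) →
      ∀ (rr : ↥(G.neighborSet p)), (↑rr : V) = r →
        lam' h' w' = lam (nadj e) rr
  lam_h_t : ∀ ⦃p q : V⦄ (hpq : H.Adj p q) (e : ↥(G.neighborSet p)), ¬ H.Adj p ↑e →
      ∀ (h' : G'.Adj (z p e) (z q (θ (H.adj_sub hpq) e)))
        (w' : ↥(G'.neighborSet (z p e))), β ↑w' = ↑e → lam' h' w' = 1
  lam_h_v : ∀ ⦃p q : V⦄ (hpq : H.Adj p q) (e : ↥(G.neighborSet p)), ¬ H.Adj p ↑e →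
      ∀ (h' : G'.Adj (z p e) (z q (θ (H.adj_sub hpq) e)))
        (e'' : ↥(G.neighborSet p)), ¬ H.Adj p ↑e'' → (↑e'' : V) ≠ ↑e →
      ∀ (w' : ↥(G'.neighborSet (z p e))), (↑w' : V') = z p e'' →
        lam' h' w' = lam (H.adj_sub hpq) e''
  lam_h_h : ∀ ⦃p q : V⦄ (hpq : H.Adj p q) (e : ↥(G.neighborSet p)), ¬ H.Adj p ↑e →
      ∀ (h' : G'.Adj (z p e) (z q (θ (H.adj_sub hpq) e)))
        ⦃r : V⦄ (hpr : H.Adj p r)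
        (w' : ↥(G'.neighborSet (z p e))), (↑w' : V') = z r (θ (H.adj_sub hpr) e) →
      ∀ (rr : ↥(G.neighborSet p)), (↑rr : V) = r →
        lam' h' w' = lam (H.adj_sub hpq) rr
  lam_v : ∀ ⦃p : V⦄, p ∈ H.verts →
      ∀ (e e' : ↥(G.neighborSet p)), ¬ H.Adj p ↑e → ¬ H.Adj p ↑e' → (↑e : V) ≠ ↑e' →
      ∀ (h' : G'.Adj (z p e) (z p e')) (w' : ↥(G'.neighborSet (z p e))),
        lam' h' w' = 1

end BlowUp
section Misc

variable {W : Type v} [AddCommGroup W] [Module ℝ W]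

/-- The induced subgraph of `G` on a set of vertices. -/
def inducedSub (G : SimpleGraph V) (s : Set V) : G.Subgraph where
  verts := s
  Adj p q := G.Adj p q ∧ p ∈ s ∧ q ∈ s
  adj_sub := fun h => h.1
  edge_vert := fun h => h.2.1
  symm := ⟨fun _ _ h => ⟨h.1.symm, h.2.2, h.2.1⟩⟩

/-- The graph of the direct product of a graph with the interval. -/
def prodIntervalGraph (G : SimpleGraph V) : SimpleGraph (V × Bool) where
  Adj x y := (x.2 = y.2 ∧ G.Adj x.1 y.1) ∨ (x.1 = y.1 ∧ x.2 ≠ y.2)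
  symm := by
    constructor
    rintro x y (⟨h1, h2⟩ | ⟨h1, h2⟩)
    · exact Or.inl ⟨h1.symm, h2.symm⟩
    · exact Or.inr ⟨h1.symm, Ne.symm h2⟩
  loopless := by
    constructor
    rintro x (⟨_, h⟩ | ⟨_, h⟩)
    · exact G.irrefl h
    · exact h rfl

/-- Specification of the direct product of the generalized 1-skeleton `(G, θ, λ, α)` in `W`
with the interval 1-skeleton `(I, α_I, θ_I, λ_I)` in `ℝ`: the result is the quadruple
`(prodIntervalGraph G, θ', λ', α')` in `W × ℝ`. -/
structure IsIntervalProduct (G : SimpleGraph V) (θ : GraphConn G) (lam : CompatSys G)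
    (α : AxialFn G W) (θ' : GraphConn (prodIntervalGraph G))
    (lam' : CompatSys (prodIntervalGraph G))
    (α' : AxialFn (prodIntervalGraph G) (W × ℝ)) : Prop where
  conn' : IsConnection (prodIntervalGraph G) θ'
  compat' : IsCompatSystem (prodIntervalGraph G) θ' lam'
  alpha_hor : ∀ ⦃x y : V × Bool⦄ (h' : (prodIntervalGraph G).Adj x y) (h : G.Adj x.1 y.1),
      x.2 = y.2 → α' h' = (α h, 0)
  alpha_up : ∀ ⦃x y : V × Bool⦄ (h' : (prodIntervalGraph G).Adj x y),
      x.1 = y.1 → x.2 = false → α' h' = (0, 1)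
  alpha_down : ∀ ⦃x y : V × Bool⦄ (h' : (prodIntervalGraph G).Adj x y),
      x.1 = y.1 → x.2 = true → α' h' = (0, -1)
  conn_hor_hor : ∀ ⦃x y : V × Bool⦄ (h' : (prodIntervalGraph G).Adj x y) (h : G.Adj x.1 y.1),
      x.2 = y.2 → ∀ (w' : ↥((prodIntervalGraph G).neighborSet x)) (w : ↥(G.neighborSet x.1)),
        (↑w' : V × Bool) = (↑w, x.2) → (↑(θ' h' w') : V × Bool) = (↑(θ h w), x.2)
  conn_hor_ver : ∀ ⦃x y : V × Bool⦄ (h' : (prodIntervalGraph G).Adj x y),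
      x.2 = y.2 → ∀ (w' : ↥((prodIntervalGraph G).neighborSet x)),
        (↑w' : V × Bool) = (x.1, !x.2) → (↑(θ' h' w') : V × Bool) = (y.1, !x.2)
  conn_ver_hor : ∀ ⦃x y : V × Bool⦄ (h' : (prodIntervalGraph G).Adj x y),
      x.1 = y.1 → ∀ (w' : ↥((prodIntervalGraph G).neighborSet x)) (w : ↥(G.neighborSet x.1)),
        (↑w' : V × Bool) = (↑w, x.2) → (↑(θ' h' w') : V × Bool) = (↑w, y.2)
  lam_hor_hor : ∀ ⦃x y : V × Bool⦄ (h' : (prodIntervalGraph G).Adj x y) (h : G.Adj x.1 y.1),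
      x.2 = y.2 → ∀ (w' : ↥((prodIntervalGraph G).neighborSet x)) (w : ↥(G.neighborSet x.1)),
        (↑w' : V × Bool) = (↑w, x.2) → lam' h' w' = lam h w
  lam_hor_ver : ∀ ⦃x y : V × Bool⦄ (h' : (prodIntervalGraph G).Adj x y),
      x.2 = y.2 → ∀ (w' : ↥((prodIntervalGraph G).neighborSet x)),
        (↑w' : V × Bool) = (x.1, !x.2) → lam' h' w' = 1
  lam_ver : ∀ ⦃x y : V × Bool⦄ (h' : (prodIntervalGraph G).Adj x y),
      x.1 = y.1 → ∀ (w' : ↥((prodIntervalGraph G).neighborSet x)), lam' h' w' = 1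

end Misc

section Polytope

/-- `(G, A)` is the vertex–edge graph of a simple `d`-polytope `S ⊆ ℝ^d`, with
`A(uv) = v - u` along each oriented edge: `g` identifies the vertices of `G` with the
extreme points of `S = convexHull F`, `S` is full-dimensional, adjacency corresponds to
exposed one-dimensional faces (segments), and `A` is given by differences of vertices. -/
def IsPolytopeSkeleton {d : ℕ} (G : SimpleGraph V) (A : AxialFn G (Fin d → ℝ)) : Prop :=
  ∃ (F : Finset (Fin d → ℝ)) (g : V → (Fin d → ℝ)),
    affineSpan ℝ (convexHull ℝ (F : Set (Fin d → ℝ))) = ⊤ ∧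
    Function.Injective g ∧
    Set.range g = Set.extremePoints ℝ (convexHull ℝ (F : Set (Fin d → ℝ))) ∧
    (∀ p q : V, G.Adj p q ↔ (g p ≠ g q ∧
        IsExposed ℝ (convexHull ℝ (F : Set (Fin d → ℝ))) (segment ℝ (g p) (g q)))) ∧
    (∀ ⦃p q : V⦄ (h : G.Adj p q), A h = g q - g p)

end Polytope
/-!
Rescaling the axial vectors by positive edge weights `κ`, `α ↦ κ⁻¹ • α`, and twisting the
compatibility system to `λ_e(e') · κ(θ_e e') / κ(e')` maps generalized 1-skeleta to equivalent
generalized 1-skeleta. Fix a linear order on the vertices and choose `κ = 1` on the edges going up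
and `κ = m_e` (the constant of gA1) on the edges going down: the rescaled axial function then
satisfies `α'(ē) = -α'(e)`, and rescaling preserves pairwise independence.
-/

section Rescaling

variable {W : Type v} [AddCommGroup W] [Module ℝ W] {G : SimpleGraph V} {θ : GraphConn G}
  {lam : CompatSys G} {α : AxialFn G W} {κ : AxialFn G ℝ}

noncomputable def rescaleAxial (κ : AxialFn G ℝ) (α : AxialFn G W) : AxialFn G W :=
  fun _ _ h => (κ h)⁻¹ • α h

noncomputable def rescaleCompat (θ : GraphConn G) (κ : AxialFn G ℝ) (lam : CompatSys G) :
    CompatSys G :=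
  fun _ _ h e => κ (nadj (θ h e)) / κ (nadj e) * lam h e

lemma smul_rescaleAxial (hκ : ∀ ⦃p q : V⦄ (h : G.Adj p q), 0 < κ h) {p q : V}
    (h : G.Adj p q) : κ h • rescaleAxial κ α h = α h := by
  rw [rescaleAxial, smul_smul, mul_inv_cancel₀ (hκ h).ne', one_smul]

lemma equivGenSkel_rescale (hκ : ∀ ⦃p q : V⦄ (h : G.Adj p q), 0 < κ h) :
    EquivGenSkel G θ lam (rescaleCompat θ κ lam) α (rescaleAxial κ α) := by
  refine ⟨κ, hκ, fun p q h => (smul_rescaleAxial hκ h).symm, fun p q h e => ?_⟩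
  have := (hκ (nadj e)).ne'
  have := (hκ (nadj (θ h e))).ne'
  simp only [rescaleCompat]
  field_simp

lemma IsCompatSystem.rescale (hθ : IsConnection G θ) (hlam : IsCompatSystem G θ lam)
    (hκ : ∀ ⦃p q : V⦄ (h : G.Adj p q), 0 < κ h) :
    IsCompatSystem G θ (rescaleCompat θ κ lam) := by
  refine ⟨fun p q h e => mul_pos (div_pos (hκ _) (hκ _)) (hlam.1 h e), fun p q h e => ?_⟩
  have hθθ : θ h.symm (θ h e) = e := by rw [hθ.2 h, Equiv.symm_apply_apply]
  simp only [rescaleCompat, hθθ, hlam.2 h e, mul_inv, inv_div]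

lemma IsGenAxial.rescale (hα : IsGenAxial G θ lam α)
    (hκ : ∀ ⦃p q : V⦄ (h : G.Adj p q), 0 < κ h) :
    IsGenAxial G θ (rescaleCompat θ κ lam) (rescaleAxial κ α) := by
  constructor
  · intro p q h
    obtain ⟨m, hm, hαm⟩ := hα.1 h
    refine ⟨(κ h)⁻¹ * m * κ h.symm, by have := hκ h; have := hκ h.symm; positivity, ?_⟩
    rw [mul_smul, mul_smul, smul_rescaleAxial hκ, rescaleAxial, hαm, smul_neg]
  · intro p q h e hne
    obtain ⟨c, hc⟩ := hα.2 h e hne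
    refine ⟨(κ (nadj e))⁻¹ * c * κ h, ?_⟩
    have := (hκ (nadj e)).ne'
    have := (hκ (nadj (θ h e))).ne'
    calc rescaleAxial κ α (nadj e)
          - rescaleCompat θ κ lam h e • rescaleAxial κ α (nadj (θ h e))
        = (κ (nadj e))⁻¹ • (α (nadj e) - lam h e • α (nadj (θ h e))) := by
          simp only [rescaleAxial, rescaleCompat, smul_sub, smul_smul]
          congr 2
          field_simp
      _ = ((κ (nadj e))⁻¹ * c * κ h) • rescaleAxial κ α h := by
          rw [hc, mul_smul, mul_smul, smul_rescaleAxial hκ]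

lemma IsGenSkeleton.rescale (hgen : IsGenSkeleton G θ lam α)
    (hκ : ∀ ⦃p q : V⦄ (h : G.Adj p q), 0 < κ h) :
    IsGenSkeleton G θ (rescaleCompat θ κ lam) (rescaleAxial κ α) :=
  ⟨hgen.connected, hgen.conn, hgen.compat.rescale hgen.conn hκ, hgen.axial.rescale hκ⟩

lemma linearIndependent_pair_rescaleAxial (hκ : ∀ ⦃p q : V⦄ (h : G.Adj p q), 0 < κ h)
    {p : V} {e e' : ↥(G.neighborSet p)}
    (hind : LinearIndependent ℝ ![α (nadj e), α (nadj e')]) :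
    LinearIndependent ℝ ![rescaleAxial κ α (nadj e), rescaleAxial κ α (nadj e')] :=
  (LinearIndependent.pair_smul_smul_iff (Ne.isUnit (inv_ne_zero (hκ _).ne'))
    (Ne.isUnit (inv_ne_zero (hκ _).ne'))).2 hind

lemma exists_rescaleAxial_symm
    (hα : ∀ ⦃p q : V⦄ (h : G.Adj p q), ∃ m : ℝ, 0 < m ∧ α h = -(m • α h.symm)) :
    ∃ κ : AxialFn G ℝ, (∀ ⦃p q : V⦄ (h : G.Adj p q), 0 < κ h) ∧
      ∀ ⦃p q : V⦄ (h : G.Adj p q), rescaleAxial κ α h.symm = -rescaleAxial κ α h := by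
  classical
  choose m hm hαm using hα
  have hdown : ∀ ⦃p q : V⦄ (h : G.Adj p q), (m h)⁻¹ • α h = -α h.symm := by
    intro p q h
    rw [hαm h, smul_neg, inv_smul_smul₀ (hm h).ne']
  let : LinearOrder V := linearOrderOfSTO WellOrderingRel
  refine ⟨fun p q h => if p < q then 1 else m h, fun p q h => ?_, ?_⟩
  · dsimp only
    split_ifs
    exacts [one_pos, hm h]
  · intro p q h
    rcases lt_or_gt_of_ne h.ne with hpq | hqp
    · simp only [rescaleAxial, if_pos hpq, if_neg hpq.not_gt, hdown, inv_one, one_smul]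
    · simp only [rescaleAxial, if_pos hqp, if_neg hqp.not_gt, hdown, inv_one, one_smul,
        neg_neg]

end Rescaling

theorem two_independent_generalized_skeleton_equivalent_to_one_skeleton_general
    {V : Type u} {n : ℕ}
    (G : SimpleGraph V) (θ : GraphConn G) (lam : CompatSys G)
    (α : AxialFn G (Fin n → ℝ))
    (hgen : IsGenSkeleton G θ lam α)
    (h2 : ∀ (p : V) (e e' : ↥(G.neighborSet p)), e ≠ e' →
      LinearIndependent ℝ ![α (nadj e), α (nadj e')]) :
    ∃ (α' : AxialFn G (Fin n → ℝ)) (lam' : CompatSys G),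
      IsOneSkeleton G θ lam' α' ∧ EquivGenSkel G θ lam lam' α α' := by
  obtain ⟨κ, hκ, hsymm⟩ := exists_rescaleAxial_symm hgen.axial.1
  exact ⟨rescaleAxial κ α, rescaleCompat θ κ lam,
    ⟨hgen.rescale hκ, hsymm,
      fun p e e' hne => linearIndependent_pair_rescaleAxial hκ (h2 p e e' hne)⟩,
    equivGenSkel_rescale hκ⟩

/-- Every 2-independent generalized 1-skeleton is equivalent to a 1-skeleton. -/
theorem two_independent_generalized_skeleton_equivalent_to_one_skeleton
    {V : Type u} [Fintype V] {n : ℕ}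
    (G : SimpleGraph V) (θ : GraphConn G) (lam : CompatSys G)
    (α : AxialFn G (Fin n → ℝ))
    (hgen : IsGenSkeleton G θ lam α)
    (h2 : ∀ (p : V) (e e' : ↥(G.neighborSet p)), e ≠ e' →
      LinearIndependent ℝ ![α (nadj e), α (nadj e')]) :
    ∃ (α' : AxialFn G (Fin n → ℝ)) (lam' : CompatSys G),
      IsOneSkeleton G θ lam' α' ∧ EquivGenSkel G θ lam lam' α α' :=
  two_independent_generalized_skeleton_equivalent_to_one_skeleton_general G θ lam α hgen h2
end

section
/- Let (Γ, α, θ) be a toral d-valent d-independent 1-skeleton in ℝ^d, and for each vertex p let X_p = {u ∈ (ℝ^d)* : ⟨u, α(e)⟩ ≥ 0 for all e ∈ E^p}. Then for any two vertices p and q there is a subset S ⊆ E^p such that X_p ∩ X_q = {u ∈ X_p : ⟨u, α(e)⟩ = 0 for all e ∈ S}; in particular X_p ∩ X_q is a face of the simplicial cone X_p (and, symmetrically, a face of X_q). -/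
open SimpleGraph

universe u u' v

variable {V : Type u}

/-- The polyhedral cone `X_p` dual to the axial vectors at `p`. -/
def XCone {V : Type u} {d : ℕ} (G : SimpleGraph V) (α : AxialFn G (Fin d → ℝ)) (p : V) :
    Set ((Fin d → ℝ) →ₗ[ℝ] ℝ) :=
  {u | ∀ ⦃q : V⦄ (h : G.Adj p q), 0 ≤ u (α h)}

/-! Take `u` in the relative interior of `X_p ∩ X_q` and let `S` be the edges at `p` on which it
vanishes. Perturbing `u` by a small generic covector that is positive at `q` yields a generic `ξ`
for which `q` is a source. The slice of `ker u` through `p` is pointed, and its `ξ`-source is a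
source of the whole skeleton because `u ≥ 0` at every vertex of that slice; hence it is `q`, so
`p` and `q` lie in one slice of `ker u`. Along an edge `e` with `w(α e) = 0` the connection matches
the values of `w` at the two ends up to positive factors, so every `w ∈ X_p` vanishing on `S`
lies in `X_q`. -/

open Filter Topology

section Covector

variable {W : Type*} [AddCommGroup W] [Module ℝ W]

theorem LinearIndependent.exists_dual_eq_one {ι : Type*} {b : ι → W}
    (hb : LinearIndependent ℝ b) : ∃ η : Module.Dual ℝ W, ∀ i, η (b i) = 1 := by
  obtain ⟨η, hη⟩ := LinearMap.exists_extend (Module.Basis.span hb).sumCoords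
  refine ⟨η, fun i => ?_⟩
  have := congrArg (fun f => f (Module.Basis.span hb i)) hη
  simpa [Module.Basis.span_apply] using this

theorem exists_pos_forall_sign_add_smul_eq {ι : Type*} [Finite ι] (u η : Module.Dual ℝ W)
    (x : ι → W) :
    ∃ t : ℝ, 0 < t ∧
      ∀ i, u (x i) ≠ 0 → SignType.sign ((u + t • η) (x i)) = SignType.sign (u (x i)) := by
  suffices ∀ᶠ t in 𝓝[>] (0 : ℝ), 0 < t ∧
      ∀ i, u (x i) ≠ 0 → SignType.sign (u (x i) + t * η (x i)) = SignType.sign (u (x i)) by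
    simpa using this.exists
  refine (eventually_mem_nhdsWithin).and (nhdsWithin_le_nhds (eventually_all.2 fun i => ?_))
  rcases eq_or_ne (u (x i)) 0 with hu | hu
  · exact .of_forall fun _ h => absurd hu h
  · have hcont : ContinuousAt (fun t : ℝ => SignType.sign (u (x i) + t * η (x i))) 0 :=
      (continuousAt_sign_of_ne_zero (by simpa using hu)).comp (by fun_prop)
    filter_upwards [hcont.eventually_mem ((isOpen_discrete _).mem_nhds (Set.mem_singleton _))]
      with t ht _
    simpa using ht

theorem exists_dual_pos_and_ne_zero {T s : Set W} (hT : T.Finite) (hs : s.Finite) (hs0 : 0 ∉ s)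
    {η₀ : Module.Dual ℝ W} (hη₀ : ∀ x ∈ T, 0 < η₀ x) :
    ∃ η : Module.Dual ℝ W, (∀ x ∈ T, 0 < η x) ∧ ∀ v ∈ s, η v ≠ 0 := by
  induction s, hs using Set.Finite.induction_on with
  | empty => exact ⟨η₀, hη₀, by simp⟩
  | @insert v s _ hs ih =>
    obtain ⟨η, hηT, hηs⟩ := ih fun h => hs0 (Set.mem_insert_of_mem v h)
    obtain ⟨φ, hφ⟩ : ∃ φ : Module.Dual ℝ W, φ v ≠ 0 := by
      by_contra! h
      exact hs0 ((Module.forall_dual_apply_eq_zero_iff ℝ v).1 h ▸ Set.mem_insert v s)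
    have : Finite ↥(T ∪ insert v s) := (hT.union (hs.insert v)).to_subtype
    obtain ⟨t, ht, hsign⟩ :=
      exists_pos_forall_sign_add_smul_eq η φ ((↑) : ↥(T ∪ insert v s) → W)
    have hsign' : ∀ x ∈ T ∪ insert v s, η x ≠ 0 →
        SignType.sign ((η + t • φ) x) = SignType.sign (η x) := fun x hx => hsign ⟨x, hx⟩
    refine ⟨η + t • φ, fun x hx => ?_, ?_⟩
    · rw [← sign_eq_one_iff, hsign' x (.inl hx) (hηT x hx).ne', sign_pos (hηT x hx)]
    · intro w hw
      rcases eq_or_ne (η w) 0 with h0 | h0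
      · obtain rfl : w = v := hw.resolve_right fun hw => hηs w hw h0
        simpa [h0] using ⟨ht.ne', hφ⟩
      · rw [← sign_ne_zero, hsign' w (.inr hw) h0, sign_ne_zero]
        exact h0

theorem AddSubmonoid.exists_mem_forall_apply_eq_zero_of_apply_eq_zero {ι : Type*} [Finite ι]
    (C : AddSubmonoid (Module.Dual ℝ W)) (x : ι → W) (hC : ∀ w ∈ C, ∀ i, 0 ≤ w (x i)) :
    ∃ u ∈ C, ∀ i, u (x i) = 0 → ∀ w ∈ C, w (x i) = 0 := by
  have hwit : ∀ i, ∃ g ∈ C, ∀ w ∈ C, w (x i) ≠ 0 → g (x i) ≠ 0 := by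
    intro i
    by_cases h : ∃ w ∈ C, w (x i) ≠ 0
    · obtain ⟨w, hw, hwi⟩ := h
      exact ⟨w, hw, fun _ _ _ => hwi⟩
    · push Not at h
      exact ⟨0, C.zero_mem, fun w hw hwi => absurd (h w hw) hwi⟩
  choose g hgC hg using hwit
  have := Fintype.ofFinite ι
  refine ⟨∑ j, g j, C.sum_mem fun j _ => hgC j, fun i hi w hw => ?_⟩
  rw [LinearMap.sum_apply,
    Finset.sum_eq_zero_iff_of_nonneg fun j _ => hC _ (hgC j) i] at hi
  by_contra hwi
  exact hg i w hw hwi (hi i (Finset.mem_univ i))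

end Covector

section Skeleton

variable {W : Type*} [AddCommGroup W] [Module ℝ W] {G : SimpleGraph V} {θ : GraphConn G}
  {lam : CompatSys G} {α : AxialFn G W}

theorem kIndep.linearIndependent_neighborSet [Finite V] {d : ℕ} (hd : Valency G d)
    (hind : kIndep G α d) (p : V) :
    LinearIndependent ℝ fun e : G.neighborSet p => α (nadj e) := by
  have := Fintype.ofFinite (G.neighborSet p)
  have hcard : (Finset.univ : Finset (G.neighborSet p)).card = d := by
    rw [Finset.card_univ, ← Nat.card_eq_fintype_card, Nat.card_coe_set_eq, hd p]
  exact (hind p Finset.univ hcard).comp (fun e => ⟨e, by simp⟩) fun e e' h => by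
    simpa using h

theorem IsOneSkeleton.exists_pos_apply_eq_mul (hsk : IsOneSkeleton G θ lam α) {p q : V}
    (h : G.Adj p q) (f : G.neighborSet q) :
    ∃ e : G.neighborSet p, ∃ c : ℝ, 0 < c ∧ ∀ u : Module.Dual ℝ W, u (α h) = 0 →
      u (α (nadj e)) = c * u (α (nadj f)) := by
  set e := (θ h).symm f
  have hθe : θ h e = f := (θ h).apply_symm_apply f
  refine ⟨e, lam h e, hsk.1.compat.1 h e, fun u hu => ?_⟩
  by_cases he : (e : V) = q
  · have he' : e = ⟨q, h⟩ := Subtype.ext he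
    have hf : f = ⟨p, h.symm⟩ := by rw [← hθe, he', hsk.1.conn.1 h]
    have hue : u (α (nadj e)) = 0 := by
      rw [he']
      exact hu
    rw [hue, hf]
    simp [hsk.2.1 h, hu]
  · obtain ⟨k, hk⟩ := hsk.1.axial.2 h e he
    have := congrArg u hk
    simp only [map_sub, map_smul, smul_eq_mul, hu, mul_zero, hθe] at this
    linarith

theorem IsOneSkeleton.nonneg_of_walk_sliceGraph_ker (hsk : IsOneSkeleton G θ lam α)
    {u w : Module.Dual ℝ W} {p r : V} (c : (sliceGraph G α (LinearMap.ker w)).Walk p r)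
    (hu : ∀ ⦃b : V⦄ (h : G.Adj p b), 0 ≤ u (α h))
    (huw : ∀ ⦃b : V⦄ (h : G.Adj p b), w (α h) = 0 → u (α h) = 0) :
    (∀ ⦃b : V⦄ (h : G.Adj r b), 0 ≤ u (α h)) ∧
      ∀ ⦃b : V⦄ (h : G.Adj r b), w (α h) = 0 → u (α h) = 0 := by
  induction c with
  | nil => exact ⟨hu, huw⟩
  | cons hadj c ih =>
    obtain ⟨h, hw, -⟩ := hadj
    have hu0 : u (α h) = 0 := huw h hw
    refine ih (fun b hb => ?_) (fun b hb hwb => ?_)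
    all_goals obtain ⟨e, k, hk, he⟩ := hsk.exists_pos_apply_eq_mul h ⟨b, hb⟩
    · exact nonneg_of_mul_nonneg_right (he u hu0 ▸ hu (nadj e)) hk
    · have := he u hu0 ▸ huw (nadj e) (by simpa [nadj, hwb] using he w hw)
      exact (mul_eq_zero.1 this).resolve_left hk.ne'

theorem Toral.eq_of_forall_pos (htoral : Toral G α) (hconn : G.Connected)
    {ξ : Module.Dual ℝ W} (hξ : GenericCovec G α ξ) {s₁ s₂ : V}
    (h₁ : ∀ ⦃b : V⦄ (h : G.Adj s₁ b), 0 < ξ (α h))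
    (h₂ : ∀ ⦃b : V⦄ (h : G.Adj s₂ b), 0 < ξ (α h)) : s₁ = s₂ := by
  have hle : G ≤ sliceGraph G α ⊤ := fun _ _ h => ⟨h, Submodule.mem_top, Submodule.mem_top⟩
  obtain ⟨r, -, hr⟩ := htoral ⊤ s₁ ξ fun _ _ h => hξ _
  rw [hr s₁ ⟨.refl s₁, fun _ h => h₁ _⟩,
    hr s₂ ⟨(hconn.preconnected s₁ s₂).mono hle, fun _ h => h₂ _⟩]

theorem exists_genericCovec_pos [Finite V]
    (hli : ∀ p, LinearIndependent ℝ fun e : G.neighborSet p => α (nadj e)) (q : V) :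
    ∃ η : Module.Dual ℝ W,
      GenericCovec G α η ∧ ∀ ⦃b : V⦄ (h : G.Adj q b), 0 < η (α h) := by
  obtain ⟨η₀, hη₀⟩ := (hli q).exists_dual_eq_one
  obtain ⟨η, hηq, hη⟩ := exists_dual_pos_and_ne_zero
    (Set.finite_range fun e : G.neighborSet q => α (nadj e))
    (Set.finite_range fun x : {x : V × V // G.Adj x.1 x.2} => α x.2)
    (fun ⟨x, hx⟩ => (hli x.1.1).ne_zero ⟨x.1.2, x.2⟩ hx)
    (η₀ := η₀) (by rintro _ ⟨e, rfl⟩; simp [hη₀])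
  exact ⟨η, fun a b h => hη _ ⟨⟨(a, b), h⟩, rfl⟩,
    fun b h => hηq _ ⟨⟨b, h⟩, rfl⟩⟩

theorem Toral.reachable_sliceGraph_ker [Finite V] (htoral : Toral G α)
    (hsk : IsOneSkeleton G θ lam α)
    (hli : ∀ p, LinearIndependent ℝ fun e : G.neighborSet p => α (nadj e))
    {u : Module.Dual ℝ W} {p q : V} (hp : ∀ ⦃b : V⦄ (h : G.Adj p b), 0 ≤ u (α h))
    (hq : ∀ ⦃b : V⦄ (h : G.Adj q b), 0 ≤ u (α h)) :
    (sliceGraph G α (LinearMap.ker u)).Reachable p q := by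
  obtain ⟨η, hηgen, hηq⟩ := exists_genericCovec_pos hli q
  obtain ⟨t, ht, hsign⟩ := exists_pos_forall_sign_add_smul_eq u η
    fun x : {x : V × V // G.Adj x.1 x.2} => α x.2
  set ξ := u + t • η
  have hξ_of_pos : ∀ ⦃a b : V⦄ (h : G.Adj a b), 0 < u (α h) → 0 < ξ (α h) :=
    fun a b h hpos => by
      rw [← sign_eq_one_iff, hsign ⟨(a, b), h⟩ hpos.ne', sign_pos hpos]
  have hξ_of_zero : ∀ ⦃a b : V⦄ (h : G.Adj a b),
      u (α h) = 0 → ξ (α h) = t * η (α h) := fun a b h h0 => by simp [ξ, h0]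
  have hξ : GenericCovec G α ξ := fun a b h => by
    rcases eq_or_ne (u (α h)) 0 with h0 | h0
    · rw [hξ_of_zero h h0]
      exact mul_ne_zero ht.ne' (hηgen h)
    · rw [← sign_ne_zero, hsign ⟨(a, b), h⟩ h0, sign_ne_zero]
      exact h0
  obtain ⟨r, ⟨hpr, hr⟩, -⟩ := htoral (LinearMap.ker u) p ξ fun _ _ h => hξ _
  have hrX := (hsk.nonneg_of_walk_sliceGraph_ker hpr.some hp fun _ _ h => h).1
  have hrξ : ∀ ⦃b : V⦄ (h : G.Adj r b), 0 < ξ (α h) := fun b h => by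
    rcases (hrX h).eq_or_lt with h0 | hpos
    · have hslice : (sliceGraph G α (LinearMap.ker u)).Adj r b :=
        ⟨h, h0.symm, by simp [hsk.2.1 h, ← h0]⟩
      exact hr ⟨hslice, hpr, hpr.trans hslice.reachable⟩
    · exact hξ_of_pos h hpos
  have hqξ : ∀ ⦃b : V⦄ (h : G.Adj q b), 0 < ξ (α h) := fun b h => by
    rcases (hq h).eq_or_lt with h0 | hpos
    · rw [hξ_of_zero h h0.symm]
      exact mul_pos ht (hηq h)
    · exact hξ_of_pos h hpos
  rw [htoral.eq_of_forall_pos hsk.1.connected hξ hqξ hrξ]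
  exact hpr

end Skeleton

section Cone

variable {d : ℕ} {G : SimpleGraph V} {α : AxialFn G (Fin d → ℝ)}

variable (G α) in
def xConeAddSubmonoid (p : V) : AddSubmonoid (Module.Dual ℝ (Fin d → ℝ)) where
  carrier := XCone G α p
  add_mem' hu hw _ h := add_nonneg (hu h) (hw h)
  zero_mem' _ _ := le_rfl

theorem exists_xCone_inter_eq_face [Finite V] {θ : GraphConn G} {lam : CompatSys G}
    (hsk : IsOneSkeleton G θ lam α)
    (hli : ∀ p, LinearIndependent ℝ fun e : G.neighborSet p => α (nadj e))
    (htoral : Toral G α) (p q : V) :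
    ∃ S : Set ↥(G.neighborSet p),
      XCone G α p ∩ XCone G α q = {u ∈ XCone G α p | ∀ e ∈ S, u (α (nadj e)) = 0} := by
  obtain ⟨u, ⟨hup, huq⟩, hu⟩ :=
    AddSubmonoid.exists_mem_forall_apply_eq_zero_of_apply_eq_zero
      (xConeAddSubmonoid G α p ⊓ xConeAddSubmonoid G α q)
      (fun e : G.neighborSet p => α (nadj e)) fun w hw e => hw.1 (nadj e)
  refine ⟨{e | u (α (nadj e)) = 0},
    Set.Subset.antisymm (fun w hw => ⟨hw.1, fun e he => hu e he w hw⟩) ?_⟩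
  rintro w ⟨hwp, hwS⟩
  obtain ⟨c⟩ := htoral.reachable_sliceGraph_ker hsk hli hup huq
  exact ⟨hwp, (hsk.nonneg_of_walk_sliceGraph_ker c hwp fun b h => hwS ⟨b, h⟩).1⟩

end Cone

/-- For a toral `d`-valent `d`-independent 1-skeleton in `ℝ^d`, each
intersection `X_p ∩ X_q` is a face of `X_p` (and symmetrically of `X_q`). -/
theorem toral_skeleton_cone_intersections_are_faces
    {V : Type u} [Fintype V] {d : ℕ}
    (G : SimpleGraph V) (θ : GraphConn G) (lam : CompatSys G)
    (α : AxialFn G (Fin d → ℝ))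
    (hsk : IsOneSkeleton G θ lam α) (hd : Valency G d) (hind : kIndep G α d)
    (htoral : Toral G α) :
    ∀ p q : V,
      (∃ S : Set ↥(G.neighborSet p),
        XCone G α p ∩ XCone G α q =
          {u ∈ XCone G α p | ∀ e ∈ S, u (α (nadj e)) = 0}) ∧
      (∃ S' : Set ↥(G.neighborSet q),
        XCone G α p ∩ XCone G α q =
          {u ∈ XCone G α q | ∀ e ∈ S', u (α (nadj e)) = 0}) := by
  have hli := hind.linearIndependent_neighborSet hd
  intro p q
  refine ⟨exists_xCone_inter_eq_face hsk hli htoral p q, ?_⟩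
  rw [Set.inter_comm]
  exact exists_xCone_inter_eq_face hsk hli htoral q p
end
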